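/- arXiv:1711.08483 — 2 statements merged into one kernel-verified Lean document; each statement's English description precedes it below -/
import Mathlib

section
/- Let G be a finite p-group of exponent p (p odd). If G/Φ(G) admits a ramification structure of size (r₁, r₂), then so does G. Specifically, any lift of a ramification structure of G/Φ(G) to spherical systems of generators of G is again a ramification structure. -/
/-!
Reduction modulo `Φ(G)` maps `Σ(T₁) ∩ Σ(T₂)` into `Σ(U₁) ∩ Σ(U₂) = {1}`. A conjugate `c tᵏ c⁻¹` of
a power of a generator `t` that dies modulo `Φ(G)` has `t̄ᵏ = 1`; as `t̄ ≠ 1` has prime order `p`,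
this forces `p ∣ k`, and then `tᵏ = 1` because `G` has exponent `p`.
-/

/-- A spherical system of generators: a tuple (list) of nontrivial elements
generating `G` whose product is `1`. -/
def IsSpherical {G : Type*} [Group G] (T : List G) : Prop :=
  (∀ g ∈ T, g ≠ 1) ∧ Subgroup.closure {g : G | g ∈ T} = ⊤ ∧ T.prod = 1

/-- `Σ(T)`: the union of all conjugates of the cyclic subgroups generated by
the entries of `T`. -/
def SigmaSet {G : Type*} [Group G] (T : List G) : Set G :=
  {x : G | ∃ t ∈ T, ∃ c : G, ∃ k : ℤ, x = c * t ^ k * c⁻¹}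

/-- An (unmixed) ramification structure: a pair of spherical systems of
generators which are disjoint, i.e. `Σ(T₁) ∩ Σ(T₂) = {1}`. -/
def IsRamificationStructure {G : Type*} [Group G] (T₁ T₂ : List G) : Prop :=
  IsSpherical T₁ ∧ IsSpherical T₂ ∧ SigmaSet T₁ ∩ SigmaSet T₂ = {1}

section SigmaSet

variable {G H : Type*} [Group G] [Group H]

theorem one_mem_sigmaSet_iff {T : List G} : (1 : G) ∈ SigmaSet T ↔ T ≠ [] := by
  constructor
  · rintro ⟨t, ht, -⟩
    exact List.ne_nil_of_mem ht
  · intro hT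
    obtain ⟨t, ht⟩ := List.exists_mem_of_ne_nil T hT
    exact ⟨t, ht, 1, 0, by simp⟩

theorem map_mem_sigmaSet_map (f : G →* H) {T : List G} {x : G} (hx : x ∈ SigmaSet T) :
    f x ∈ SigmaSet (T.map f) := by
  obtain ⟨t, ht, c, k, rfl⟩ := hx
  exact ⟨f t, List.mem_map_of_mem ht, f c, k, by simp⟩

theorem zpow_eq_one_of_map_zpow_eq_one {p : ℕ} [Fact p.Prime] (f : G →* H) {t : G}
    (htp : t ^ p = 1) (hft : f t ≠ 1) {k : ℤ} (hk : f t ^ k = 1) : t ^ k = 1 := by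
  have hord : orderOf (f t) = p := orderOf_eq_prime (by rw [← map_pow, htp, map_one]) hft
  obtain ⟨n, rfl⟩ : (p : ℤ) ∣ k := hord ▸ orderOf_dvd_iff_zpow_eq_one.mpr hk
  rw [zpow_mul, zpow_natCast, htp, one_zpow]

theorem eq_one_of_mem_sigmaSet_of_map_eq_one {p : ℕ} [Fact p.Prime] (f : G →* H) {T : List G}
    (hexp : ∀ t ∈ T, t ^ p = 1) (hne : ∀ t ∈ T, f t ≠ 1) {x : G} (hx : x ∈ SigmaSet T)
    (hfx : f x = 1) : x = 1 := by
  obtain ⟨t, ht, c, k, rfl⟩ := hx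
  have hftk : f t ^ k = 1 := by
    simpa only [map_mul, map_inv, map_zpow, conj_eq_one_iff] using hfx
  rw [zpow_eq_one_of_map_zpow_eq_one f (hexp t ht) (hne t ht) hftk, mul_one, mul_inv_cancel]

theorem sigmaSet_inter_eq_singleton_one_of_map {p : ℕ} [Fact p.Prime] (f : G →* H)
    {T₁ T₂ : List G} (hexp : ∀ t ∈ T₁, t ^ p = 1) (hne : ∀ t ∈ T₁, f t ≠ 1)
    (hf : SigmaSet (T₁.map f) ∩ SigmaSet (T₂.map f) = {1}) :
    SigmaSet T₁ ∩ SigmaSet T₂ = {1} := by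
  obtain ⟨hT₁, hT₂⟩ : (1 : H) ∈ SigmaSet (T₁.map f) ∩ SigmaSet (T₂.map f) := hf ▸ rfl
  rw [one_mem_sigmaSet_iff, Ne, List.map_eq_nil_iff] at hT₁ hT₂
  ext x
  refine ⟨fun ⟨hx₁, hx₂⟩ => ?_, ?_⟩
  · have hfx : f x ∈ SigmaSet (T₁.map f) ∩ SigmaSet (T₂.map f) :=
      ⟨map_mem_sigmaSet_map f hx₁, map_mem_sigmaSet_map f hx₂⟩
    rw [hf] at hfx
    exact eq_one_of_mem_sigmaSet_of_map_eq_one f hexp hne hx₁ hfx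
  · rintro rfl
    exact ⟨one_mem_sigmaSet_iff.mpr hT₁, one_mem_sigmaSet_iff.mpr hT₂⟩

end SigmaSet

theorem stmt_13_general {G : Type*} [Group G] (p : ℕ) (hp : p.Prime)
    (hexp : ∀ g : G, g ^ p = 1)
    (U₁ U₂ : List (G ⧸ frattini G)) (hU : IsRamificationStructure U₁ U₂)
    (T₁ T₂ : List G)
    (hT₁ : T₁.map (QuotientGroup.mk : G → G ⧸ frattini G) = U₁)
    (hT₂ : T₂.map (QuotientGroup.mk : G → G ⧸ frattini G) = U₂)
    (hs₁ : IsSpherical T₁) (hs₂ : IsSpherical T₂) :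
    IsRamificationStructure T₁ T₂ := by
  have : Fact p.Prime := ⟨hp⟩
  subst hT₁ hT₂
  obtain ⟨⟨hne, -⟩, -, hdisj⟩ := hU
  exact ⟨hs₁, hs₂, sigmaSet_inter_eq_singleton_one_of_map (QuotientGroup.mk' (frattini G))
    (fun t _ => hexp t) (fun t ht => hne _ (List.mem_map_of_mem ht)) hdisj⟩

theorem stmt_13 {G : Type*} [Group G] [Finite G] (p : ℕ) (hp : p.Prime)
    (hodd : Odd p) (hexp : ∀ g : G, g ^ p = 1)
    (U₁ U₂ : List (G ⧸ frattini G)) (hU : IsRamificationStructure U₁ U₂)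
    (T₁ T₂ : List G)
    (hT₁ : T₁.map (QuotientGroup.mk : G → G ⧸ frattini G) = U₁)
    (hT₂ : T₂.map (QuotientGroup.mk : G → G ⧸ frattini G) = U₂)
    (hs₁ : IsSpherical T₁) (hs₂ : IsSpherical T₂) :
    IsRamificationStructure T₁ T₂ :=
  stmt_13_general p hp hexp U₁ U₂ hU T₁ T₂ hT₁ hT₂ hs₁ hs₂
end

section
/- Let G be a finite p-group of exponent p^e that is semi-p^{e-1}-abelian. If (T₁, T₂) is a ramification structure for G, then the images of T₁ and T₂ in G/Ω_{e-1}(G), after deleting identity entries, form a ramification structure for G/Ω_{e-1}(G). -/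
/-!
Under the semi-`p^{e-1}`-abelian hypothesis, `Ω_{e-1}(G)` is exactly the set of elements killed
by `n = p^{e-1}`, and two elements have the same image in `G/Ω_{e-1}(G)` exactly when their
`n`-th powers agree. Since `Σ(T)` is closed under powers, a common element `f a = f b` of the
two image sets (`f` the quotient map) gives the common element `a ^ n = b ^ n` of `Σ(T₁)` and `Σ(T₂)`, which must be
`1`; hence `f a = 1`. The exponent `p^e` makes the quotient nontrivial, so the filtered image
lists are nonempty and both sets do contain `1`.
-/

open Function Subgroup

theorem List.prod_filter_ne_one {M : Type*} [Monoid M] [DecidableEq M] (L : List M) :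
    (L.filter (· ≠ 1)).prod = L.prod := by
  convert L.prod_filter_bne_one using 3
  grind

theorem Monoid.exists_pow_ne_one_of_exponent_eq_prime_pow {G : Type*} [Monoid G] {p e : ℕ}
    (hp : p.Prime) (he : 1 ≤ e) (hexp : Monoid.exponent G = p ^ e) :
    ∃ g : G, g ^ p ^ (e - 1) ≠ 1 := by
  by_contra! h
  have hdvd := Monoid.exponent_dvd_of_forall_pow_eq_one h
  rw [hexp, Nat.pow_dvd_pow_iff_le_right hp.one_lt] at hdvd
  omega

section Semiabelian

variable {G : Type*} [Group G] {n : ℕ}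

theorem pow_eq_one_of_mem_closure_setOf_pow_eq_one
    (hsemi : ∀ x y : G, x ^ n = y ^ n ↔ (x * y⁻¹) ^ n = 1) {g : G}
    (hg : g ∈ closure {g : G | g ^ n = 1}) : g ^ n = 1 := by
  induction hg using Subgroup.closure_induction with
  | mem x hx => exact hx
  | one => exact one_pow n
  | mul x y _ _ hx hy => simpa using (hsemi x y⁻¹).1 (by rw [hx, inv_pow, hy, inv_one])
  | inv x _ hx => rw [inv_pow, hx, inv_one]

theorem mem_closure_setOf_pow_eq_one_iff
    (hsemi : ∀ x y : G, x ^ n = y ^ n ↔ (x * y⁻¹) ^ n = 1) {g : G} :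
    g ∈ closure {g : G | g ^ n = 1} ↔ g ^ n = 1 :=
  ⟨pow_eq_one_of_mem_closure_setOf_pow_eq_one hsemi, fun hg => subset_closure hg⟩

end Semiabelian

section Ramification

variable {G H : Type*} [Group G] [Group H]

theorem closure_setOf_mem_filter_ne_one [DecidableEq G] (L : List G) :
    closure {g | g ∈ L.filter (· ≠ 1)} = closure {g | g ∈ L} := by
  refine le_antisymm (closure_mono fun g hg => List.mem_of_mem_filter hg) ?_
  refine (closure_le _).2 fun g hg => ?_
  by_cases h1 : g = 1
  · rw [h1]
    exact one_mem _
  · exact subset_closure (List.mem_filter.2 ⟨hg, by simpa using h1⟩)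

theorem IsSpherical.map_filter_ne_one [DecidableEq H] {f : G →* H} (hf : Surjective f)
    {T : List G} (hT : IsSpherical T) : IsSpherical ((T.map f).filter (· ≠ 1)) := by
  obtain ⟨-, hgen, hprod⟩ := hT
  refine ⟨fun g hg => by simpa using List.of_mem_filter hg, ?_, ?_⟩
  · have himage : {g | g ∈ T.map f} = f '' {g | g ∈ T} := by ext; simp
    rw [closure_setOf_mem_filter_ne_one, himage, ← MonoidHom.map_closure, hgen,
      map_top_of_surjective f hf]
  · rw [List.prod_filter_ne_one, ← map_list_prod, hprod, map_one]

theorem IsSpherical.ne_nil [Nontrivial G] {T : List G} (hT : IsSpherical T) : T ≠ [] := by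
  rintro rfl
  have htop := hT.2.1
  simp only [List.not_mem_nil, Set.ofPred_false, Subgroup.closure_empty] at htop
  exact bot_ne_top htop

theorem one_mem_sigmaSet {T : List G} (hT : T ≠ []) : 1 ∈ SigmaSet T := by
  obtain ⟨t, ht⟩ := List.exists_mem_of_ne_nil T hT
  exact ⟨t, ht, 1, 0, by simp⟩

theorem pow_mem_sigmaSet {T : List G} {x : G} (hx : x ∈ SigmaSet T) (n : ℕ) :
    x ^ n ∈ SigmaSet T := by
  obtain ⟨t, ht, c, k, rfl⟩ := hx
  exact ⟨t, ht, c, k * n, by rw [conj_pow, zpow_mul, zpow_natCast]⟩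

theorem sigmaSet_map_filter_subset_image {f : G →* H} (hf : Surjective f) (T : List G)
    (P : H → Bool) : SigmaSet ((T.map f).filter P) ⊆ f '' SigmaSet T := by
  rintro _ ⟨_, ht', c', k, rfl⟩
  obtain ⟨t, ht, rfl⟩ := List.mem_map.1 (List.mem_of_mem_filter ht')
  obtain ⟨c, rfl⟩ := hf c'
  exact ⟨c * t ^ k * c⁻¹, ⟨t, ht, c, k, rfl⟩, by simp⟩

theorem IsRamificationStructure.map_filter_ne_one [DecidableEq H] [Nontrivial H] {f : G →* H}
    (hf : Surjective f) {n : ℕ} (hfib : ∀ a b, f a = f b ↔ a ^ n = b ^ n) {T₁ T₂ : List G}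
    (h : IsRamificationStructure T₁ T₂) :
    IsRamificationStructure ((T₁.map f).filter (· ≠ 1)) ((T₂.map f).filter (· ≠ 1)) := by
  obtain ⟨h₁, h₂, hdisj⟩ := h
  have hs₁ := h₁.map_filter_ne_one hf
  have hs₂ := h₂.map_filter_ne_one hf
  refine ⟨hs₁, hs₂, Set.Subset.antisymm ?_ ?_⟩
  · rintro _ ⟨hx₁, hx₂⟩
    obtain ⟨a, ha, rfl⟩ := sigmaSet_map_filter_subset_image hf _ _ hx₁
    obtain ⟨b, hb, hba⟩ := sigmaSet_map_filter_subset_image hf _ _ hx₂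
    have hpow : a ^ n = 1 :=
      hdisj.subset ⟨pow_mem_sigmaSet ha n, (hfib b a).1 hba ▸ pow_mem_sigmaSet hb n⟩
    rw [Set.mem_singleton_iff, ← map_one f, hfib, hpow, one_pow]
  · rintro _ rfl
    exact ⟨one_mem_sigmaSet hs₁.ne_nil, one_mem_sigmaSet hs₂.ne_nil⟩

end Ramification

theorem stmt_15_general {G : Type*} [Group G] (p e : ℕ) (hp : p.Prime)
    (he : 1 ≤ e) (hexp : Monoid.exponent G = p ^ e)
    (hsemi : ∀ x y : G,
      x ^ p ^ (e - 1) = y ^ p ^ (e - 1) ↔ (x * y⁻¹) ^ p ^ (e - 1) = 1)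
    (Ω : Subgroup G) [Ω.Normal]
    (hΩ : Ω = Subgroup.closure {g : G | g ^ p ^ (e - 1) = 1})
    [DecidableEq (G ⧸ Ω)]
    (T₁ T₂ : List G) (h : IsRamificationStructure T₁ T₂) :
    IsRamificationStructure
      ((T₁.map (QuotientGroup.mk : G → G ⧸ Ω)).filter (· ≠ 1))
      ((T₂.map (QuotientGroup.mk : G → G ⧸ Ω)).filter (· ≠ 1)) := by
  have hmem : ∀ g : G, g ∈ Ω ↔ g ^ p ^ (e - 1) = 1 := fun g =>
    hΩ ▸ mem_closure_setOf_pow_eq_one_iff hsemi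
  have hfib : ∀ a b : G, QuotientGroup.mk' Ω a = QuotientGroup.mk' Ω b ↔
      a ^ p ^ (e - 1) = b ^ p ^ (e - 1) := fun a b => by
    rw [QuotientGroup.mk'_apply, QuotientGroup.mk'_apply, QuotientGroup.eq_iff_div_mem, hmem,
      div_eq_mul_inv, hsemi]
  obtain ⟨g, hg⟩ := Monoid.exists_pow_ne_one_of_exponent_eq_prime_pow hp he hexp
  have : Nontrivial (G ⧸ Ω) :=
    nontrivial_of_ne (g : G ⧸ Ω) 1 (by rwa [Ne, QuotientGroup.eq_one_iff, hmem])
  exact h.map_filter_ne_one (QuotientGroup.mk'_surjective Ω) hfib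

theorem stmt_15 {G : Type*} [Group G] [Finite G] (p e : ℕ) (hp : p.Prime)
    (he : 1 ≤ e) (hpG : IsPGroup p G) (hexp : Monoid.exponent G = p ^ e)
    (hsemi : ∀ x y : G,
      x ^ p ^ (e - 1) = y ^ p ^ (e - 1) ↔ (x * y⁻¹) ^ p ^ (e - 1) = 1)
    (Ω : Subgroup G) [Ω.Normal]
    (hΩ : Ω = Subgroup.closure {g : G | g ^ p ^ (e - 1) = 1})
    [DecidableEq (G ⧸ Ω)]
    (T₁ T₂ : List G) (h : IsRamificationStructure T₁ T₂) :
    IsRamificationStructure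
      ((T₁.map (QuotientGroup.mk : G → G ⧸ Ω)).filter (· ≠ 1))
      ((T₂.map (QuotientGroup.mk : G → G ⧸ Ω)).filter (· ≠ 1)) :=
  stmt_15_general p e hp he hexp hsemi Ω hΩ T₁ T₂ h
end
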